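/- arXiv:2508.10614 — 5 statements merged into one kernel-verified Lean document; each statement's English description precedes it below -/
import Mathlib

section
/- Let T(0)=0, T(1)=1, T(n+2)=4·T(n+1)−T(n). Then for all a, b, c ≥ 1, T(a)·T(b)·T(c) ≤ T(a+b+c). -/
theorem stmt_2 (T : ℕ → ℤ)
    (h0 : T 0 = 0) (h1 : T 1 = 1)
    (hrec : ∀ n, T (n + 2) = 4 * T (n + 1) - T n) :
    ∀ a b c : ℕ, 1 ≤ a → 1 ≤ b → 1 ≤ c →
      T a * T b * T c ≤ T (a + b + c) := by
  have key : ∀ n, 0 ≤ T n ∧ T n ≤ T (n + 1) := by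
    intro n
    induction n with
    | zero => simp [h0, h1]
    | succ k ih =>
      obtain ⟨h01, h12⟩ := ih
      have h2 : T (k + 1) ≤ T (k + 2) := by rw [hrec]; linarith
      exact ⟨le_trans h01 h12, h2⟩
  have pos1 : ∀ n, 1 ≤ T (n + 1) := by
    intro n
    induction n with
    | zero => simp [h1]
    | succ k ih => exact le_trans ih (key (k + 1)).2
  have step3 : ∀ n, 3 * T n ≤ T (n + 1) := by
    intro n
    cases n with
    | zero => simp [h0, h1]
    | succ k =>
      have := (key k).2
      have h0k := (key k).1
      rw [hrec]; linarith
  have iden : ∀ m n, T (m + 1 + n) = T (m + 1) * T (n + 1) - T m * T n := by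
    intro m
    have H : ∀ n, (T (m + 1 + n) = T (m + 1) * T (n + 1) - T m * T n) ∧
        (T (m + 1 + (n + 1)) = T (m + 1) * T (n + 2) - T m * T (n + 1)) := by
      intro n
      induction n with
      | zero =>
        refine ⟨by simp [h0, h1], ?_⟩
        have h2 : T 2 = 4 * T 1 - T 0 := hrec 0
        rw [show m + 1 + (0 + 1) = m + 2 from by ring, hrec m, h2, h0, h1]
        ring
      | succ k ih =>
        obtain ⟨ih1, ih2⟩ := ih
        refine ⟨ih2, ?_⟩
        have e1 : T (m + 1 + (k + 1 + 1)) = 4 * T (m + 1 + (k + 1)) - T (m + 1 + k) :=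
          hrec (m + 1 + k)
        have e2 : T (k + 1 + 1 + 1) = 4 * T (k + 1 + 1) - T (k + 1) := hrec (k + 1)
        have e3 : T (k + 1 + 1) = 4 * T (k + 1) - T k := hrec k
        linear_combination e1 + 4 * ih2 - ih1 - T (m + 1) * e2 + T m * e3
    exact fun n => (H n).1
  have superadd : ∀ a b : ℕ, 1 ≤ a → 1 ≤ b → T a * T b ≤ T (a + b) := by
    intro a b ha hb
    obtain ⟨m, rfl⟩ := Nat.exists_eq_add_of_le ha
    obtain ⟨n, rfl⟩ := Nat.exists_eq_add_of_le hb
    rw [show 1 + m + (1 + n) = m + 1 + (n + 1) from by ring, iden m (n + 1),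
      show 1 + m = m + 1 from by ring, show 1 + n = n + 1 from by ring]
    have h1m := (key m).2
    have h0m := (key m).1
    have h0n1 : (0:ℤ) ≤ T (n + 1) := (key (n + 1)).1
    have h0m1 : (0:ℤ) ≤ T (m + 1) := (key (m + 1)).1
    have h3 := step3 (n + 1)
    nlinarith [mul_nonneg h0m1 h0n1]
  intro a b c ha hb hc
  have h1 : T a * T b ≤ T (a + b) := superadd a b ha hb
  have h2 : T (a + b) * T c ≤ T (a + b + c) := superadd (a + b) c (by omega) hc
  have hc0 : (0:ℤ) ≤ T c := (key c).1
  have hab0 : (0:ℤ) ≤ T a * T b := mul_nonneg (key a).1 (key b).1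
  calc T a * T b * T c ≤ T (a + b) * T c := by
        exact mul_le_mul_of_nonneg_right h1 hc0
    _ ≤ T (a + b + c) := h2
end

section
/- Let T(0)=0, T(1)=1, T(n+2)=4·T(n+1)−T(n). Then for all a, b ≥ 1, T(a)·T(b) ≤ T(a+b). -/
theorem stmt_3 (T : ℕ → ℤ)
    (h0 : T 0 = 0) (h1 : T 1 = 1)
    (hrec : ∀ n, T (n + 2) = 4 * T (n + 1) - T n) :
    ∀ a b : ℕ, 1 ≤ a → 1 ≤ b → T a * T b ≤ T (a + b) := by
  have key : ∀ n, 0 ≤ T n ∧ 2 * T n ≤ T (n + 1) := by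
    intro n
    induction n with
    | zero => constructor <;> simp [h0, h1]
    | succ k ih =>
      obtain ⟨hk, hk2⟩ := ih
      refine ⟨by linarith, ?_⟩
      have := hrec k
      linarith
  have pos : ∀ n, 0 ≤ T n := fun n => (key n).1
  have grow : ∀ n, 2 * T n ≤ T (n + 1) := fun n => (key n).2
  have add : ∀ b a, T (a + b + 1) = T (a + 1) * T (b + 1) - T a * T b := by
    intro b
    induction b using Nat.strong_induction_on with
    | _ b ih =>
      match b with
      | 0 => intro a; simp [h0, h1]
      | 1 =>
        intro a
        have h2 : T 2 = 4 := by have := hrec 0; simp [h0, h1] at this; linarith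
        have := hrec a
        rw [show a + 1 + 1 = a + 2 from rfl] at *
        rw [this, h2, h1]; ring
      | (k + 2) =>
        intro a
        have e1 := ih (k + 1) (by omega) a
        have e0 := ih k (by omega) a
        have r1 := hrec (a + k + 1)
        have r2 := hrec (k + 1)
        have r3 := hrec k
        have : a + k + 1 + 2 = a + (k + 2) + 1 := by ring
        rw [this] at r1
        rw [r1, show a + k + 1 + 1 = a + (k+1) + 1 from by ring, e1,
          show a + k + 1 = a + k + 1 from rfl, e0,
          show k + 2 + 1 = k + 1 + 2 from rfl, r2, show k + 1 + 1 = k + 2 from rfl, r3]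
        ring
  intro a b ha hb
  obtain ⟨b', rfl⟩ : ∃ b', b = b' + 1 := ⟨b - 1, by omega⟩
  have := add b' a
  rw [show a + (b' + 1) = a + b' + 1 from rfl, this]
  have h1a : T a ≤ T (a + 1) - T a := by have := grow a; linarith
  have h2b : T b' ≤ T (b' + 1) := by have := grow b'; have := pos b'; linarith
  have : T a * T b' ≤ (T (a + 1) - T a) * T (b' + 1) :=
    mul_le_mul h1a h2b (pos b') (by have := pos a; linarith)
  nlinarith [this]
end

section
/- Let T(0)=0, T(1)=1, T(n+2)=4T(n+1)−T(n), and for odd n = 2m+1 define S(n) = n + Σ_{i=0}^{m−1} (6+4i)·T(m−i)^2. Then lim_{m→∞} S(2m+1)/T(2m+1) = (3+√3)/9. -/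
/-! `T n = (a ^ n - b ^ n) / (a - b)` with `a = 2 + √3`, `b = 2 - √3 = a⁻¹`. Multiplying numerator
and denominator by `b ^ (2 * m)`, the denominator becomes `a * T (2m+1) b ^ (2m+1) → a / (2√3)`, and
the sum becomes `∑ i < m, (6 + 4i) b^(2i) (T (m-i) b^(m-i))²`: a summable weight convolved with a
sequence tending to `1 / 12`, so by Tannery's theorem it tends to `(∑ (6 + 4i) b^(2i)) / 12`. -/

open Filter Finset Topology

theorem eq_pow_sub_pow_div_of_rec {T : ℕ → ℝ} {a b : ℝ} (hab : a ≠ b) (h0 : T 0 = 0)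
    (h1 : T 1 = 1) (hrec : ∀ n, T (n + 2) = (a + b) * T (n + 1) - a * b * T n) (n : ℕ) :
    T n = (a ^ n - b ^ n) / (a - b) := by
  have hab' : a - b ≠ 0 := sub_ne_zero.2 hab
  induction n using Nat.twoStepInduction with
  | zero => simp [h0]
  | one => simp [h1, hab']
  | more n ih1 ih2 =>
    rw [hrec, ih1, ih2]
    field_simp
    ring

theorem tendsto_sum_range_mul_sub {x y : ℕ → ℝ} {s L : ℝ} (hx : HasSum x s)
    (hy : Tendsto y atTop (𝓝 L)) :
    Tendsto (fun m ↦ ∑ i ∈ range m, x i * y (m - i)) atTop (𝓝 (s * L)) := by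
  obtain ⟨C, hC⟩ := hy.abs.bddAbove_range
  have hyC : ∀ k, |y k| ≤ C := fun k ↦ hC ⟨k, rfl⟩
  let f : ℕ → ℕ → ℝ := fun m i ↦ if i < m then x i * y (m - i) else 0
  have hf : ∀ m, ∑ i ∈ range m, x i * y (m - i) = ∑' i, f m i := fun m ↦ by
    rw [tsum_eq_sum (s := range m) fun i hi ↦ if_neg (by simpa using hi)]
    exact sum_congr rfl fun i hi ↦ (if_pos (mem_range.1 hi)).symm
  have hlim : ∀ i, Tendsto (f · i) atTop (𝓝 (x i * L)) := fun i ↦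
    ((hy.comp (tendsto_sub_atTop_nat i)).const_mul (x i)).congr'
      ((eventually_gt_atTop i).mono fun m hm ↦ (if_pos hm).symm)
  have hbound : ∀ m i, ‖f m i‖ ≤ |x i| * C := fun m i ↦ by
    by_cases hi : i < m
    · simpa [f, hi, abs_mul] using mul_le_mul_of_nonneg_left (hyC (m - i)) (abs_nonneg (x i))
    · simpa [f, hi] using mul_nonneg (abs_nonneg (x i)) ((abs_nonneg (y 0)).trans (hyC 0))
  simp_rw [hf, ← hx.tsum_eq, ← tsum_mul_right]
  exact tendsto_tsum_of_dominated_convergence (hx.summable.abs.mul_right C) hlim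
    (Eventually.of_forall hbound)

theorem tendsto_mul_pow_of_binet {T : ℕ → ℝ} {a b : ℝ} (hab : a * b = 1) (hb : |b| < 1)
    (hT : ∀ n, T n = (a ^ n - b ^ n) / (a - b)) :
    Tendsto (fun n ↦ T n * b ^ n) atTop (𝓝 (a - b)⁻¹) := by
  have hpow := tendsto_pow_atTop_nhds_zero_of_abs_lt_one hb
  have hlim := ((hpow.mul hpow).const_sub 1).div_const (a - b)
  rw [mul_zero, sub_zero, one_div] at hlim
  refine hlim.congr fun n ↦ ?_
  rw [hT, div_mul_eq_mul_div, sub_mul, ← mul_pow a, hab, one_pow]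

theorem hasSum_affine_mul_geometric {q : ℝ} (hq0 : 0 ≤ q) (hq1 : q < 1) (c d : ℝ) :
    HasSum (fun i : ℕ ↦ (c + d * i) * q ^ i) (c / (1 - q) + d * q / (1 - q) ^ 2) := by
  have hnorm : ‖q‖ < 1 := by rwa [Real.norm_of_nonneg hq0]
  have hsum := ((hasSum_geometric_of_lt_one hq0 hq1).mul_left c).add
    ((hasSum_coe_mul_geometric_of_norm_lt_one hnorm).mul_left d)
  rw [show c / (1 - q) + d * q / (1 - q) ^ 2 = c * (1 - q)⁻¹ + d * (q / (1 - q) ^ 2) by ring]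
  exact hsum.congr_fun fun i ↦ by ring

theorem sum_range_sq_mul_pow_eq (c T : ℕ → ℝ) (b : ℝ) (m : ℕ) :
    (∑ i ∈ range m, c i * T (m - i) ^ 2) * (b ^ 2) ^ m =
      ∑ i ∈ range m, c i * (b ^ 2) ^ i * (T (m - i) * b ^ (m - i)) ^ 2 := by
  rw [sum_mul]
  refine sum_congr rfl fun i hi ↦ ?_
  rw [show (b ^ 2) ^ m = (b ^ 2) ^ i * (b ^ (m - i)) ^ 2 by
    rw [← pow_mul, ← pow_mul, ← pow_mul, ← pow_add]
    congr 1
    have := mem_range.1 hi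
    omega]
  ring

theorem tendsto_sum_sq_div_of_binet {T : ℕ → ℝ} {a b : ℝ} (hab : a * b = 1) (hb : |b| < 1)
    (hT : ∀ n, T n = (a ^ n - b ^ n) / (a - b)) :
    Tendsto (fun m : ℕ ↦
        ((2 * m + 1 : ℝ) + ∑ i ∈ range m, (6 + 4 * (i : ℝ)) * T (m - i) ^ 2) / T (2 * m + 1))
      atTop (𝓝 ((6 / (1 - b ^ 2) + 4 * b ^ 2 / (1 - b ^ 2) ^ 2) / ((a - b) * a))) := by
  set q := b ^ 2
  have hq0 : 0 ≤ q := sq_nonneg b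
  have hq1 : q < 1 := by nlinarith [abs_nonneg b, sq_abs b]
  have hab' : a - b ≠ 0 := by
    rintro h
    rw [sub_eq_zero.1 h] at hab
    nlinarith [abs_nonneg b, sq_abs b]
  have ha : a ≠ 0 := left_ne_zero_of_mul_eq_one hab
  have hu := tendsto_mul_pow_of_binet hab hb hT
  have hlin : Tendsto (fun m : ℕ ↦ (2 * m + 1 : ℝ) * q ^ m) atTop (𝓝 0) := by
    have h1 := tendsto_pow_const_mul_const_pow_of_lt_one 1 hq0 hq1
    have h0 := tendsto_pow_atTop_nhds_zero_of_lt_one hq0 hq1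
    simpa [add_mul, mul_assoc] using (h1.const_mul 2).add h0
  have hnum := hlin.add
    (tendsto_sum_range_mul_sub (hasSum_affine_mul_geometric hq0 hq1 6 4) (hu.pow 2))
  have hodd : Tendsto (fun m : ℕ ↦ 2 * m + 1) atTop atTop :=
    tendsto_atTop_mono (fun m ↦ (by omega : m ≤ 2 * m + 1)) tendsto_id
  have hden := (hu.comp hodd).const_mul a
  have hratio := hnum.div hden (mul_ne_zero ha (inv_ne_zero hab'))
  convert hratio using 1
  · ext m
    have hq : q ^ m ≠ 0 := pow_ne_zero m (pow_ne_zero 2 (right_ne_zero_of_mul_eq_one hab))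
    have hnum_eq := congrArg ((2 * m + 1 : ℝ) * q ^ m + ·)
      (sum_range_sq_mul_pow_eq (fun i ↦ 6 + 4 * (i : ℝ)) T b m)
    have hden_eq : T (2 * m + 1) * q ^ m = a * (T (2 * m + 1) * b ^ (2 * m + 1)) := by
      rw [← pow_mul, pow_succ']
      linear_combination -T (2 * m + 1) * b ^ (2 * m) * hab
    simp only [Pi.div_apply, Function.comp_apply]
    rw [← hnum_eq, ← hden_eq, ← add_mul, mul_div_mul_right _ _ hq]
  · have hq_ne : 1 - q ≠ 0 := by linarith
    rw [zero_add]
    field_simp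

theorem stmt_8 (T : ℕ → ℝ)
    (h0 : T 0 = 0) (h1 : T 1 = 1)
    (hrec : ∀ n, T (n + 2) = 4 * T (n + 1) - T n) :
    Filter.Tendsto
      (fun m : ℕ =>
        ((2 * m + 1 : ℝ) + ∑ i ∈ Finset.range m, (6 + 4 * (i : ℝ)) * (T (m - i)) ^ 2)
          / T (2 * m + 1))
      Filter.atTop (nhds ((3 + Real.sqrt 3) / 9)) := by
  have hs : √3 ^ 2 = 3 := Real.sq_sqrt (by norm_num)
  have hs0 : 0 < √3 := by positivity
  have hab : (2 + √3) * (2 - √3) = 1 := by linear_combination -hs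
  have hb : |2 - √3| < 1 := abs_lt.2 ⟨by nlinarith, by nlinarith⟩
  have hT := eq_pow_sub_pow_div_of_rec (a := 2 + √3) (b := 2 - √3) (by linarith) h0 h1 fun n ↦ by
    rw [hrec, hab]
    ring
  convert tendsto_sum_sq_div_of_binet hab hb hT using 2
  rw [show 1 - (2 - √3) ^ 2 = 2 * √3 * (2 - √3) by linear_combination hs]
  have hb0 : 2 - √3 ≠ 0 := by nlinarith
  field_simp
  linear_combination 8 * √3 ^ 3 * (3 + √3) * hab + 8 * (√3 ^ 2 + 3 * √3 + 3) * hs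
end

section
/- Let T(0)=0, T(1)=1, T(n+2)=4T(n+1)−T(n), and for even n = 2m (m ≥ 1) define S(n) = n + 2·T(m)^2 + Σ_{i=1}^{m−1} (4+4i)·T(m−i)^2. Then lim_{m→∞} S(2m)/T(2m) = (1+4√3)/(6√3). -/
theorem stmt_9 (T : ℕ → ℝ)
    (h0 : T 0 = 0) (h1 : T 1 = 1)
    (hrec : ∀ n, T (n + 2) = 4 * T (n + 1) - T n) :
    Filter.Tendsto
      (fun m : ℕ =>
        ((2 * m : ℝ) + 2 * (T m) ^ 2 +
            ∑ i ∈ Finset.Ico 1 m, (4 + 4 * (i : ℝ)) * (T (m - i)) ^ 2)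
          / T (2 * m))
      Filter.atTop (nhds ((1 + 4 * Real.sqrt 3) / (6 * Real.sqrt 3))) := by
  have hT2 : T 2 = 4 := by have h := hrec 0; norm_num [h0, h1] at h; exact h
  have hT3 : T 3 = 15 := by have h := hrec 1; norm_num [h1, hT2] at h; exact h
  have hT4 : T 4 = 56 := by have h := hrec 2; norm_num [hT2, hT3] at h; exact h
  have cass : ∀ n, T (n+1)^2 - 4*T (n+1)*T n + T n^2 = 1 := by
    intro n; induction n with
    | zero => rw [h0, h1]; norm_num
    | succ k ih =>
      have e : k+1+1 = k+2 := by omega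
      rw [e, hrec k]; linear_combination ih
  have DD : ∀ k, T (2*k+1) = T (k+1)^2 - T k^2 ∧ T (2*k+2) = T (k+1) * (T (k+2) - T k) := by
    intro k; induction k with
    | zero =>
      constructor
      · norm_num [h0, h1]
      · norm_num [h0, h1, hT2]
    | succ k ih =>
      obtain ⟨i1, i2⟩ := ih
      have e1 : 2*(k+1)+1 = 2*k+1+2 := by omega
      have e2 : 2*k+1+1 = 2*k+2 := by omega
      have e3 : 2*(k+1)+2 = 2*k+2+2 := by omega
      have e4 : 2*k+2+1 = 2*k+1+2 := by omega
      have e5 : k+1+1 = k+2 := by omega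
      constructor
      · rw [e1, hrec (2*k+1), e2, i1, i2, e5, hrec k]; ring
      · rw [e3, hrec (2*k+2), e4, hrec (2*k+1), e2, i2, i1, hrec (k+1), e5, hrec k]; ring
  have L3 : ∀ k, T (2*k+3) - T (2*k+1) = 12 * T (k+1)^2 + 2 := by
    intro k
    have d1 := (DD k).1
    have d2 := (DD (k+1)).1
    have e1 : 2*(k+1)+1 = 2*k+3 := by omega
    have e5 : k+1+1 = k+2 := by omega
    rw [e1, e5] at d2
    rw [d2, d1, hrec k]; linear_combination 2 * cass k
  have L4 : ∀ k, T (2*k+4) - T (2*k+2) = 12 * T (k+1) * T (k+2) + 4 := by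
    intro k
    have d1 := (DD k).2
    have d2 := (DD (k+1)).2
    have e1 : 2*(k+1)+2 = 2*k+4 := by omega
    have e5 : k+1+1 = k+2 := by omega
    have e6 : k+1+2 = k+3 := by omega
    rw [e1, e5, e6] at d2
    have h3 : T (k+3) = 4*T (k+2) - T (k+1) := by
      have h := hrec (k+1); rwa [e6, e5] at h
    rw [d2, d1, h3, hrec k]; linear_combination 4 * cass k
  have helper : ∀ k, ∑ j ∈ Finset.range k, T (k - j)^2 = (T (2*k+1) - 1 - 2*(k:ℝ))/12 := by
    intro k; induction k with
    | zero => norm_num [h1]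
    | succ k ih =>
      rw [Finset.sum_range_succ']
      have hc : ∀ j ∈ Finset.range k, T (k+1-(j+1))^2 = T (k-j)^2 := by
        intro j hj
        have e : k+1-(j+1) = k-j := by omega
        rw [e]
      rw [Finset.sum_congr rfl hc, ih]
      have e : 2*(k+1)+1 = 2*k+3 := by omega
      rw [e]
      simp only [Nat.sub_zero]
      push_cast
      linear_combination -(L3 k) / 12
  have key : ∀ k : ℕ, 2*((k:ℝ)+1) + 2 * T (k+1)^2 + ∑ j ∈ Finset.range k, (8 + 4*(j:ℝ)) * T (k - j)^2
      = 41/18 * T (2*(k+1)+1) - 5/9 * T (2*(k+1)+2) - ((k:ℝ)+1)^2/3 + 4*((k:ℝ)+1)/3 - 1/18 := by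
    intro k; induction k with
    | zero =>
      simp only [Finset.sum_range_zero]
      norm_num [h1, hT3, hT4]
    | succ k ih =>
      rw [Finset.sum_range_succ']
      have hterm : ∀ j ∈ Finset.range k, (8 + 4*((j+1 : ℕ):ℝ)) * T (k+1-(j+1))^2
          = ((8+4*(j:ℝ)) * T (k-j)^2) + 4 * T (k-j)^2 := by
        intro j hj
        have e : k+1-(j+1) = k-j := by omega
        rw [e]; push_cast; ring
      rw [Finset.sum_congr rfl hterm, Finset.sum_add_distrib, ← Finset.mul_sum, helper k]
      simp only [Nat.sub_zero, Nat.cast_zero]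
      have e1 : 2*(k+1+1)+1 = 2*k+5 := by omega
      have e2 : 2*(k+1+1)+2 = 2*k+6 := by omega
      have e3 : k+1+1 = k+2 := by omega
      rw [e1, e2, e3]
      have A3 := L3 (k+1)
      have A4 := L4 (k+1)
      have e4 : 2*(k+1)+3 = 2*k+5 := by omega
      have e5 : 2*(k+1)+1 = 2*k+3 := by omega
      have e6 : 2*(k+1)+4 = 2*k+6 := by omega
      have e7 : 2*(k+1)+2 = 2*k+4 := by omega
      have e8 : k+1+2 = k+3 := by omega
      rw [e4, e5, e3] at A3
      rw [e6, e7, e3, e8] at A4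
      rw [e5, e7] at ih
      have d1 := (DD k).1
      have h3 : T (k+3) = 4*T (k+2) - T (k+1) := by
        have h := hrec (k+1); rwa [e8, e3] at h
      rw [h3] at A4
      rw [d1]
      rw [hrec k] at A3 A4 ⊢
      push_cast
      linear_combination ih - (41/18) * A3 + (5/9) * A4 + cass k
  have numeq : ∀ k : ℕ, (2 * ((k+1 : ℕ):ℝ) + 2 * T (k+1) ^ 2 +
      ∑ i ∈ Finset.Ico 1 (k+1), (4 + 4 * (i : ℝ)) * T (k+1-i) ^ 2)
      = 41/18 * T (2*(k+1)+1) - 5/9 * T (2*(k+1)+2) - ((k:ℝ)+1)^2/3 + 4*((k:ℝ)+1)/3 - 1/18 := by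
    intro k
    have hsum : ∑ i ∈ Finset.Ico 1 (k+1), (4 + 4 * (i : ℝ)) * T (k+1-i) ^ 2
        = ∑ j ∈ Finset.range k, (8 + 4*(j:ℝ)) * T (k - j)^2 := by
      rw [Finset.sum_Ico_eq_sum_range]
      simp only [Nat.add_sub_cancel]
      apply Finset.sum_congr rfl
      intro j hj
      have e : k+1-(1+j) = k-j := by omega
      rw [e]; push_cast; ring
    rw [hsum]
    push_cast
    linear_combination key k
  -- Part 2: explicit formula and limits
  set s := Real.sqrt 3 with hs_def
  have hsq : s ^ 2 = 3 := Real.sq_sqrt (by norm_num)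
  have hs_pos : 0 < s := Real.sqrt_pos.mpr (by norm_num)
  have hs0 : s ≠ 0 := ne_of_gt hs_pos
  have hs2 : s < 2 := by nlinarith
  have hs1 : 1 < s := by nlinarith
  have form : ∀ n, T n = ((2+s)^n - (2-s)^n)/(2*s) := by
    have key2 : ∀ n, T n = ((2+s)^n - (2-s)^n)/(2*s) ∧
        T (n+1) = ((2+s)^(n+1) - (2-s)^(n+1))/(2*s) := by
      intro n; induction n with
      | zero =>
        constructor
        · simp [h0]
        · rw [h1, pow_one, pow_one]; field_simp; ring
      | succ k ih =>
        obtain ⟨i1, i2⟩ := ih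
        refine ⟨i2, ?_⟩
        have e : k+1+1 = k+2 := by omega
        rw [e, hrec k, i1, i2]
        have p1 : (2+s)^(k+2) = (2+s)^k * (7+4*s) := by
          rw [pow_add]; linear_combination (2+s)^k * hsq
        have p2 : (2-s)^(k+2) = (2-s)^k * (7-4*s) := by
          rw [pow_add]; linear_combination (2-s)^k * hsq
        have p3 : (2+s)^(k+1) = (2+s)^k * (2+s) := pow_succ _ _
        have p4 : (2-s)^(k+1) = (2-s)^k * (2-s) := pow_succ _ _
        rw [p1, p2, p3, p4]
        field_simp
        ring
    exact fun n => (key2 n).1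
  have formT : ∀ n, 2*s*T n = (2+s)^n - (2-s)^n := by
    intro n; rw [form n]; field_simp
  set r : ℝ := (2-s)^2 with hr_def
  have hr0 : 0 ≤ r := sq_nonneg _
  have hr1 : r < 1 := by rw [hr_def]; nlinarith
  have hw : Filter.Tendsto (fun m : ℕ => r^m) Filter.atTop (nhds 0) :=
    tendsto_pow_atTop_nhds_zero_of_lt_one hr0 hr1
  have hw2 : Filter.Tendsto (fun m : ℕ => (r^m)^2) Filter.atTop (nhds 0) := by
    have h := hw.mul hw
    simp only [mul_zero] at h
    convert h using 2 with m
    ring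
  have habs : ‖r‖ < 1 := by rw [Real.norm_eq_abs, abs_of_nonneg hr0]; exact hr1
  have hm2 : Filter.Tendsto (fun m : ℕ => (m:ℝ)^2 * r^m) Filter.atTop (nhds 0) :=
    (summable_pow_mul_geometric_of_norm_lt_one 2 habs).tendsto_atTop_zero
  have hm1 : Filter.Tendsto (fun m : ℕ => (m:ℝ) * r^m) Filter.atTop (nhds 0) := by
    have h := (summable_pow_mul_geometric_of_norm_lt_one 1 habs).tendsto_atTop_zero
    simpa using h
  have hpoly : Filter.Tendsto (fun m : ℕ => 2*s*(-((m:ℝ)^2)/3 + 4*(m:ℝ)/3 - 1/18)*(r^m))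
      Filter.atTop (nhds 0) := by
    have heq : (fun m : ℕ => 2*s*(-((m:ℝ)^2)/3 + 4*(m:ℝ)/3 - 1/18)*(r^m))
        = (fun m : ℕ => (-(2*s)/3)*((m:ℝ)^2*r^m) + (8*s/3)*((m:ℝ)*r^m) + (-(s)/9)*(r^m)) := by
      funext m; ring
    rw [heq]
    have h := ((hm2.const_mul (-(2*s)/3)).add (hm1.const_mul (8*s/3))).add (hw.const_mul (-(s)/9))
    simpa using h
  have hA : Filter.Tendsto (fun m : ℕ => 41/18*((2+s) - (2-s)*(r^m)^2) - 5/9*((2+s)^2 - (2-s)^2*(r^m)^2)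
      + 2*s*(-((m:ℝ)^2)/3 + 4*(m:ℝ)/3 - 1/18)*(r^m))
      Filter.atTop (nhds (41/18*(2+s) - 5/9*(2+s)^2)) := by
    have hA1 : Filter.Tendsto (fun m : ℕ => 41/18*((2+s) - (2-s)*(r^m)^2)) Filter.atTop
        (nhds (41/18*(2+s))) := by
      have h : Filter.Tendsto (fun m : ℕ => (2+s) - (2-s)*(r^m)^2) Filter.atTop
          (nhds ((2+s) - (2-s)*0)) := tendsto_const_nhds.sub (hw2.const_mul _)
      have h2 := h.const_mul (41/18)
      simpa using h2
    have hA2 : Filter.Tendsto (fun m : ℕ => 5/9*((2+s)^2 - (2-s)^2*(r^m)^2)) Filter.atTop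
        (nhds (5/9*(2+s)^2)) := by
      have h : Filter.Tendsto (fun m : ℕ => (2+s)^2 - (2-s)^2*(r^m)^2) Filter.atTop
          (nhds ((2+s)^2 - (2-s)^2*0)) := tendsto_const_nhds.sub (hw2.const_mul _)
      have h2 := h.const_mul (5/9)
      simpa using h2
    have h := (hA1.sub hA2).add hpoly
    simpa using h
  have hB : Filter.Tendsto (fun m : ℕ => 1 - (r^m)^2) Filter.atTop (nhds 1) := by
    have h : Filter.Tendsto (fun m : ℕ => (1:ℝ) - (r^m)^2) Filter.atTop (nhds (1 - 0)) :=
      tendsto_const_nhds.sub hw2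
    simpa using h
  have hval : (41/18*(2+s) - 5/9*(2+s)^2) = (1 + 4*s)/(6*s) := by
    field_simp
    linear_combination (54 - 540*s) * hsq
  have hlim := hA.div hB one_ne_zero
  rw [div_one, hval] at hlim
  refine Filter.Tendsto.congr' ?_ hlim
  filter_upwards [Filter.eventually_ge_atTop 1] with m hm
  obtain ⟨k, rfl⟩ : ∃ k, m = k+1 := ⟨m-1, by omega⟩
  rw [numeq k]
  set x := (2+s)^(k+1) with hx
  set y := (2-s)^(k+1) with hy
  have hy0 : y ≠ 0 := pow_ne_zero _ (by nlinarith)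
  have hxy : x*y = 1 := by
    rw [hx, hy, ← mul_pow]
    have h : (2+s)*(2-s) = 1 := by linear_combination -hsq
    rw [h, one_pow]
  have hc : 2*s*y^2 ≠ 0 := by
    apply mul_ne_zero (mul_ne_zero two_ne_zero hs0) (pow_ne_zero _ hy0)
  have q0 : (2+s)^(2*(k+1)) = x^2 := by
    rw [show 2*(k+1) = (k+1)*2 from by ring, pow_mul]
  have q0' : (2-s)^(2*(k+1)) = y^2 := by
    rw [show 2*(k+1) = (k+1)*2 from by ring, pow_mul]
  have f0 : 2*s*T (2*(k+1)) = x^2 - y^2 := by rw [formT, q0, q0']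
  have f1 : 2*s*T (2*(k+1)+1) = (2+s)*x^2 - (2-s)*y^2 := by
    rw [formT, pow_succ, pow_succ, q0, q0']; ring
  have f2 : 2*s*T (2*(k+1)+2) = (2+s)^2*x^2 - (2-s)^2*y^2 := by
    rw [formT, pow_add, pow_add, q0, q0']; ring
  have hry : r^(k+1) = y^2 := by
    rw [hr_def, ← pow_mul]; exact q0'
  have hAeq : 41/18*((2+s) - (2-s)*(r^(k+1))^2) - 5/9*((2+s)^2 - (2-s)^2*(r^(k+1))^2)
      + 2*s*(-(((k+1:ℕ):ℝ)^2)/3 + 4*((k+1:ℕ):ℝ)/3 - 1/18)*(r^(k+1))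
      = (41/18 * T (2*(k+1)+1) - 5/9 * T (2*(k+1)+2) - ((k:ℝ)+1)^2/3 + 4*((k:ℝ)+1)/3 - 1/18)
        * (2*s*y^2) := by
    rw [hry]
    push_cast
    linear_combination (-(41/18)*y^2) * f1 + ((5/9)*y^2) * f2
      + (-(41/18*(2+s) - 5/9*(2+s)^2)*(x*y+1)) * hxy
  have hBeq : 1 - (r^(k+1))^2 = T (2*(k+1)) * (2*s*y^2) := by
    rw [hry]
    linear_combination (-(y^2)) * f0 + (-(x*y+1)) * hxy
  simp only [Pi.div_apply]
  rw [hAeq, hBeq, mul_div_mul_right _ _ hc]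
end

section
/- Let T(0)=0, T(1)=1, T(n+2)=4T(n+1)−T(n), and Y(i,m) = (6+4i)·T(m−i)^2/T(2m+1) for 0 ≤ i < m, Y(i,m)=0 for i ≥ m. Then lim_{m→∞} Σ_{i=0}^∞ Y(i,m) = Σ_{i=0}^∞ lim_{m→∞} Y(i,m) = Σ_{i=0}^∞ (6+4i)/(2√3·(2+√3)^(2i+1)). -/
open Filter Real

set_option maxHeartbeats 1000000 in
theorem stmt_12 (T : ℕ → ℝ)
    (h0 : T 0 = 0) (h1 : T 1 = 1)
    (hrec : ∀ n, T (n + 2) = 4 * T (n + 1) - T n)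
    (Y : ℕ → ℕ → ℝ)
    (hY : ∀ i m, Y i m =
      if i < m then (6 + 4 * (i : ℝ)) * (T (m - i)) ^ 2 / T (2 * m + 1) else 0) :
    Filter.Tendsto (fun m : ℕ => ∑' i : ℕ, Y i m) Filter.atTop
      (nhds (∑' i : ℕ,
        (6 + 4 * (i : ℝ)) / (2 * Real.sqrt 3 * (2 + Real.sqrt 3) ^ (2 * i + 1)))) ∧
    ∀ i : ℕ, Filter.Tendsto (fun m : ℕ => Y i m) Filter.atTop
      (nhds ((6 + 4 * (i : ℝ)) /
        (2 * Real.sqrt 3 * (2 + Real.sqrt 3) ^ (2 * i + 1)))) := by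
  set s := Real.sqrt 3 with hsdef
  have hs0 : (0:ℝ) < s := Real.sqrt_pos.mpr (by norm_num)
  have hs2 : s ^ 2 = 3 := Real.sq_sqrt (by norm_num)
  have hs1 : 1 < s := by nlinarith
  have hslt : s < 7/4 := by nlinarith
  set a := 2 + s with hadef
  set b := 2 - s with hbdef
  have hab : a * b = 1 := by rw [hadef, hbdef]; nlinarith
  have ha3 : (3:ℝ) < a := by rw [hadef]; linarith
  have hb0 : (0:ℝ) < b := by rw [hbdef]; linarith
  have hb1 : b < 1 := by rw [hbdef]; linarith
  have ha0 : (0:ℝ) < a := by linarith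
  -- closed form
  have hT : ∀ n, T n = (a ^ n - b ^ n) / (2 * s) := by
    have key : ∀ n, T n = (a ^ n - b ^ n) / (2 * s) ∧
        T (n + 1) = (a ^ (n + 1) - b ^ (n + 1)) / (2 * s) := by
      intro n
      induction n with
      | zero =>
        constructor
        · simp [h0]
        · rw [h1]; rw [hadef, hbdef]; field_simp; ring
      | succ n ih =>
        refine ⟨ih.2, ?_⟩
        have ha2 : a ^ 2 = 4 * a - 1 := by rw [hadef]; nlinarith
        have hb2 : b ^ 2 = 4 * b - 1 := by rw [hbdef]; nlinarith
        have h2 : T (n + 2) = 4 * T (n + 1) - T n := hrec n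
        rw [show n + 1 + 1 = n + 2 from rfl, h2, ih.1, ih.2]
        have hsne : (2 * s) ≠ 0 := by positivity
        field_simp
        linear_combination (a ^ n) * ha2 - (b ^ n) * hb2 +
          (2 * b ^ n - 2 * a ^ n) * hs2
    exact fun n => (key n).1
  -- useful decomposition
  have hpow : ∀ n : ℕ, a ^ n - b ^ n = a ^ n * (1 - b ^ (2 * n)) := by
    intro n
    have h1' : b ^ (2 * n) = b ^ n * b ^ n := by rw [two_mul, pow_add]
    have h2' : a ^ n * b ^ n = 1 := by rw [← mul_pow, hab, one_pow]
    rw [h1']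
    linear_combination (b ^ n) * h2'
  have hv1 : ∀ m : ℕ, b ^ (4 * m + 2) < 1 :=
    fun m => pow_lt_one₀ hb0.le hb1 (by omega)
  -- key algebraic identity
  have key2 : ∀ i m : ℕ, i < m → Y i m =
      (6 + 4 * (i : ℝ)) * (1 - b ^ (2 * (m - i))) ^ 2 /
        (2 * s * a ^ (2 * i + 1) * (1 - b ^ (4 * m + 2))) := by
    intro i m him
    obtain ⟨k, rfl⟩ := Nat.exists_eq_add_of_lt him
    have hmi : i + k + 1 - i = k + 1 := by omega
    rw [hY, if_pos him, hT, hT, hmi, hpow (k + 1), hpow (2 * (i + k + 1) + 1)]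
    have e2 : 2 * (2 * (i + k + 1) + 1) = 4 * (i + k + 1) + 2 := by ring
    rw [e2]
    have e3 : 2 * (i + k + 1) + 1 = (k + 1) + ((k + 1) + (2 * i + 1)) := by ring
    rw [e3, pow_add, pow_add]
    have hA : a ^ (k + 1) ≠ 0 := by positivity
    have hB : a ^ (2 * i + 1) ≠ 0 := by positivity
    have hv : (1 : ℝ) - b ^ (4 * (i + k + 1) + 2) ≠ 0 := by
      have := hv1 (i + k + 1); linarith
    have hsne : s ≠ 0 := ne_of_gt hs0
    field_simp
    ring
  -- pointwise limits
  have hpt : ∀ i : ℕ, Filter.Tendsto (fun m : ℕ => Y i m) Filter.atTop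
      (nhds ((6 + 4 * (i : ℝ)) / (2 * s * a ^ (2 * i + 1)))) := by
    intro i
    have hx : Tendsto (fun m : ℕ => b ^ (2 * (m - i))) atTop (nhds 0) :=
      (tendsto_pow_atTop_nhds_zero_of_lt_one hb0.le hb1).comp
        (tendsto_atTop_atTop.2 fun n => ⟨n + i, fun m hm => by omega⟩)
    have hy : Tendsto (fun m : ℕ => b ^ (4 * m + 2)) atTop (nhds 0) :=
      (tendsto_pow_atTop_nhds_zero_of_lt_one hb0.le hb1).comp
        (tendsto_atTop_atTop.2 fun n => ⟨n, fun m hm => by omega⟩)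
    have hC : (0:ℝ) < 2 * s * a ^ (2 * i + 1) := by positivity
    have hg : Tendsto (fun m : ℕ =>
        (6 + 4 * (i : ℝ)) * (1 - b ^ (2 * (m - i))) ^ 2 /
          (2 * s * a ^ (2 * i + 1) * (1 - b ^ (4 * m + 2)))) atTop
        (nhds ((6 + 4 * (i : ℝ)) * (1 - 0) ^ 2 / (2 * s * a ^ (2 * i + 1) * (1 - 0)))) := by
      exact Tendsto.div
        (tendsto_const_nhds.mul ((tendsto_const_nhds.sub hx).pow 2))
        (tendsto_const_nhds.mul (tendsto_const_nhds.sub hy))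
        (by simpa using ne_of_gt hC)
    have hg' : Tendsto (fun m : ℕ =>
        (6 + 4 * (i : ℝ)) * (1 - b ^ (2 * (m - i))) ^ 2 /
          (2 * s * a ^ (2 * i + 1) * (1 - b ^ (4 * m + 2)))) atTop
        (nhds ((6 + 4 * (i : ℝ)) / (2 * s * a ^ (2 * i + 1)))) := by
      convert hg using 2; ring
    refine Tendsto.congr' ?_ hg'
    filter_upwards [eventually_ge_atTop (i + 1)] with m hm
    exact (key2 i m (by omega)).symm
  -- uniform bound
  have hbound : ∀ m i : ℕ, ‖Y i m‖ ≤ (6 + 4 * (i : ℝ)) / 3 ^ (2 * i + 1) := by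
    intro m i
    have hnum0 : (0:ℝ) ≤ 6 + 4 * (i : ℝ) := by positivity
    by_cases him : i < m
    · rw [key2 i m him]
      have hu0 : (0:ℝ) ≤ b ^ (2 * (m - i)) := by positivity
      have hu1 : b ^ (2 * (m - i)) ≤ 1 := pow_le_one₀ hb0.le hb1.le
      have hvv : b ^ (4 * m + 2) ≤ b ^ 2 :=
        pow_le_pow_of_le_one hb0.le hb1.le (by omega)
      have hv0 : (0:ℝ) < 1 - b ^ (4 * m + 2) := by linarith [hv1 m]
      have hD : (3:ℝ) ^ (2 * i + 1) ≤ 2 * s * a ^ (2 * i + 1) * (1 - b ^ (4 * m + 2)) := by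
        have h1' : (3:ℝ) ^ (2 * i + 1) ≤ a ^ (2 * i + 1) :=
          pow_le_pow_left₀ (by norm_num) ha3.le _
        have h2' : (1:ℝ) ≤ 2 * s * (1 - b ^ (4 * m + 2)) := by
          have : 2 * s * (1 - b ^ 2) ≥ 3 := by rw [hbdef]; nlinarith
          nlinarith [pow_pos ha0 (2 * i + 1)]
        nlinarith [pow_pos ha0 (2 * i + 1), pow_pos (show (0:ℝ) < 3 by norm_num) (2 * i + 1)]
      have hDpos : (0:ℝ) < 2 * s * a ^ (2 * i + 1) * (1 - b ^ (4 * m + 2)) := by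
        have : (0:ℝ) < 2 * s * a ^ (2 * i + 1) := by positivity
        exact mul_pos this hv0
      rw [Real.norm_eq_abs, abs_of_nonneg (div_nonneg (by positivity) hDpos.le)]
      have h3pos : (0:ℝ) < (3:ℝ) ^ (2 * i + 1) := by positivity
      rw [div_le_div_iff₀ hDpos h3pos]
      have hN : (6 + 4 * (i : ℝ)) * (1 - b ^ (2 * (m - i))) ^ 2 ≤ 6 + 4 * (i : ℝ) := by
        have hsq : (1 - b ^ (2 * (m - i))) ^ 2 ≤ 1 := by nlinarith
        calc (6 + 4 * (i : ℝ)) * (1 - b ^ (2 * (m - i))) ^ 2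
            ≤ (6 + 4 * (i : ℝ)) * 1 := mul_le_mul_of_nonneg_left hsq hnum0
          _ = 6 + 4 * (i : ℝ) := mul_one _
      calc (6 + 4 * (i : ℝ)) * (1 - b ^ (2 * (m - i))) ^ 2 * 3 ^ (2 * i + 1)
          ≤ (6 + 4 * (i : ℝ)) * 3 ^ (2 * i + 1) :=
            mul_le_mul_of_nonneg_right hN h3pos.le
        _ ≤ (6 + 4 * (i : ℝ)) * (2 * s * a ^ (2 * i + 1) * (1 - b ^ (4 * m + 2))) :=
            mul_le_mul_of_nonneg_left hD hnum0
    · rw [hY, if_neg him]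
      simp only [norm_zero]
      positivity
  -- summability of the bound
  have hsum : Summable (fun i : ℕ => (6 + 4 * (i : ℝ)) / 3 ^ (2 * i + 1)) := by
    have heq : ∀ i : ℕ, (6 + 4 * (i : ℝ)) / 3 ^ (2 * i + 1) =
        (6 * (1/9 : ℝ) ^ i + 4 * ((i : ℝ) ^ 1 * (1/9 : ℝ) ^ i)) / 3 := by
      intro i
      have h39 : (3:ℝ) ^ (2 * i + 1) = 3 * 9 ^ i := by
        rw [pow_add, pow_mul]; norm_num [mul_comm]
      have h99 : (1/9 : ℝ) ^ i = 1 / 9 ^ i := by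
        rw [div_pow, one_pow]
      rw [h39, h99, pow_one]
      have h9pos : (0:ℝ) < 9 ^ i := by positivity
      field_simp
      try ring
      try exact Or.inl trivial
    have h9 : ‖(1/9 : ℝ)‖ < 1 := by
      rw [Real.norm_eq_abs, abs_of_nonneg (by norm_num : (0:ℝ) ≤ 1/9)]; norm_num
    have hsg : Summable (fun i : ℕ => (1/9 : ℝ) ^ i) :=
      summable_geometric_of_lt_one (by norm_num) (by norm_num)
    have hsp : Summable (fun i : ℕ => (i : ℝ) ^ 1 * (1/9 : ℝ) ^ i) :=
      summable_pow_mul_geometric_of_norm_lt_one 1 h9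
    have : Summable (fun i : ℕ =>
        (6 * (1/9 : ℝ) ^ i + 4 * ((i : ℝ) ^ 1 * (1/9 : ℝ) ^ i)) / 3) :=
      ((hsg.mul_left 6).add (hsp.mul_left 4)).div_const 3
    exact this.congr fun i => (heq i).symm
  refine ⟨?_, hpt⟩
  exact tendsto_tsum_of_dominated_convergence hsum hpt
    (Filter.Eventually.of_forall fun m i => hbound m i)
end
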